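/- The block diagonal matrix M = diag(N, P) with N = [[1,2,-1],[-1,0,-2],[0,1,-1]] and P = [[0,-1],[1,0]] lies in SL(5, ℤ), and its eigenvalues consist of one positive real number α ≠ 1 together with two pairs of complex conjugate non-real eigenvalues. -/

import Mathlib

/-!
The matrix is block diagonal, so its determinant is `det N * det P = 1 * 1` and its
characteristic polynomial is `(X ^ 3 + 3 X - 1) (X ^ 2 + 1)`. The cubic changes sign on `(0, 1)`,
giving a real root `α ∈ (0, 1)`, and its cofactor `X ^ 2 + α X + (α ^ 2 + 3)` has negative
discriminant `-3 α ^ 2 - 12`; a real quadratic with negative discriminant splits over `ℂ` into a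
non-real root and its conjugate, and so does `X ^ 2 + 1`.
-/

open Matrix Polynomial ComplexConjugate

theorem exists_X_sq_add_C_mul_X_add_C_eq_X_sub_C_mul_X_sub_C_conj {b c : ℝ}
    (h : b ^ 2 < 4 * c) :
    ∃ β : ℂ, β.im ≠ 0 ∧
      (X ^ 2 + C (b : ℂ) * X + C (c : ℂ) : ℂ[X]) = (X - C β) * (X - C (conj β)) := by
  have hd : 0 < c - b ^ 2 / 4 := by linarith
  set β : ℂ := ⟨-b / 2, √(c - b ^ 2 / 4)⟩
  have hsum : β + conj β = -b := by
    rw [Complex.add_conj, show β.re = -b / 2 from rfl]; push_cast; ring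
  have hprod : β * conj β = c := by
    rw [Complex.mul_conj, Complex.normSq_mk, Real.mul_self_sqrt hd.le]; push_cast; ring
  refine ⟨β, (Real.sqrt_pos.2 hd).ne', ?_⟩
  calc (X ^ 2 + C (b : ℂ) * X + C (c : ℂ) : ℂ[X])
      = X ^ 2 - C (-b : ℂ) * X + C (c : ℂ) := by simp
    _ = (X - C β) * (X - C (conj β)) := by rw [← hsum, ← hprod, C_add, C_mul]; ring

theorem exists_mem_Ioo_zero_one_pow_three_add_three_mul_sub_one_eq_zero :
    ∃ α ∈ Set.Ioo (0 : ℝ) 1, α ^ 3 + 3 * α - 1 = 0 := by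
  have hc : ContinuousOn (fun x : ℝ => x ^ 3 + 3 * x - 1) (Set.Icc 0 1) := by fun_prop
  exact intermediate_value_Ioo zero_le_one hc (by norm_num)

theorem X_pow_three_add_three_mul_X_sub_one_eq_mul {R : Type*} [CommRing R] {a : R}
    (ha : a ^ 3 + 3 * a - 1 = 0) :
    (X ^ 3 + 3 * X - 1 : R[X]) = (X - C a) * (X ^ 2 + C a * X + C (a ^ 2 + 3)) := by
  have hC : C a ^ 3 + 3 * C a - 1 = 0 := by
    simpa only [map_sub, map_add, map_mul, map_pow, map_ofNat, map_one, map_zero]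
      using congrArg C ha
  rw [map_add, map_pow, map_ofNat]
  linear_combination hC

theorem charpoly_fromBlocks_map_intCast_eq :
    ((fromBlocks !![(1 : ℤ), 2, -1; -1, 0, -2; 0, 1, -1] 0 0 !![(0 : ℤ), -1; 1, 0]).map
      (Int.cast : ℤ → ℂ)).charpoly = (X ^ 3 + 3 * X - 1) * (X ^ 2 + 1) := by
  have hN : (!![(1 : ℤ), 2, -1; -1, 0, -2; 0, 1, -1]).charpoly = X ^ 3 + 3 * X - 1 := by
    rw [charpoly, det_fin_three]
    simp
    ring
  have hP : (!![(0 : ℤ), -1; 1, 0]).charpoly = X ^ 2 + 1 := by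
    simp [charpoly_fin_two, trace_fin_two, det_fin_two]
  rw [show (Int.cast : ℤ → ℂ) = Int.castRingHom ℂ from rfl, charpoly_map,
    charpoly_fromBlocks_zero₁₂, hN, hP]
  simp

/-- The block diagonal matrix `M = diag(N, P)` with `N = [[1,2,-1],[-1,0,-2],[0,1,-1]]`
and `P = [[0,-1],[1,0]]` lies in `SL(5,ℤ)`, and its eigenvalues consist of one positive
real number `α ≠ 1` together with two pairs of complex conjugate non-real eigenvalues. -/
theorem stmt_7
    (M : Matrix (Fin 3 ⊕ Fin 2) (Fin 3 ⊕ Fin 2) ℤ)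
    (hM : M = Matrix.fromBlocks
      !![(1 : ℤ), 2, -1; -1, 0, -2; 0, 1, -1] 0 0 !![(0 : ℤ), -1; 1, 0]) :
    M.det = 1 ∧
    ∃ (α : ℝ) (β₁ β₂ : ℂ), 0 < α ∧ α ≠ 1 ∧ β₁.im ≠ 0 ∧ β₂.im ≠ 0 ∧
      (M.map (Int.cast : ℤ → ℂ)).charpoly.roots =
        {(α : ℂ), β₁, (starRingEnd ℂ) β₁, β₂, (starRingEnd ℂ) β₂} := by
  subst hM
  refine ⟨by simp [det_fromBlocks_zero₂₁, det_fin_three, det_fin_two], ?_⟩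
  obtain ⟨α, ⟨hα₀, hα₁⟩, hα⟩ :=
    exists_mem_Ioo_zero_one_pow_three_add_three_mul_sub_one_eq_zero
  obtain ⟨β₁, hβ₁, hcofactor⟩ := exists_X_sq_add_C_mul_X_add_C_eq_X_sub_C_mul_X_sub_C_conj
    (show α ^ 2 < 4 * (α ^ 2 + 3) by nlinarith)
  obtain ⟨β₂, hβ₂, hP⟩ := exists_X_sq_add_C_mul_X_add_C_eq_X_sub_C_mul_X_sub_C_conj
    (show (0 : ℝ) ^ 2 < 4 * 1 by norm_num)
  refine ⟨α, β₁, β₂, hα₀, hα₁.ne, hβ₁, hβ₂, ?_⟩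
  have hcubic := X_pow_three_add_three_mul_X_sub_one_eq_mul
    (a := (α : ℂ)) (by exact_mod_cast congrArg ((↑) : ℝ → ℂ) hα)
  push_cast at hcofactor hP
  rw [map_zero, map_one, zero_mul, add_zero] at hP
  rw [charpoly_fromBlocks_map_intCast_eq, hcubic, hcofactor, hP,
    ← roots_multiset_prod_X_sub_C {(α : ℂ), β₁, conj β₁, β₂, conj β₂}]
  simp [mul_assoc]
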